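/- arXiv:2401.00418 — 5 statements merged into one kernel-verified Lean document; each statement's English description precedes it below -/
import Mathlib

section
/- For every prime power q and every integer d ≥ 1: if d < 2q then n_q(2,d,1) = 2⌈d/2⌉ + 2, and if d ≥ 2q then n_q(2,d,1) = d + ⌈d/q⌉. -/
open scoped Classical

/-- The Hamming weight of a vector: the number of nonzero coordinates. -/
noncomputable def hamWt {F : Type} [Field F] {n : ℕ} (c : Fin n → F) : ℕ :=
  (Finset.univ.filter fun i => c i ≠ 0).card

/-- `C` is a linear `[n,k,d]` code over `F`: a `k`-dimensional subspace of `F^n`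
in which every nonzero codeword has Hamming weight at least `d`. -/
def IsCode {F : Type} [Field F] {n : ℕ} (k d : ℕ) (C : Submodule F (Fin n → F)) : Prop :=
  Module.finrank F ↥C = k ∧ ∀ c ∈ C, c ≠ 0 → d ≤ hamWt c

/-- `C ⊆ F^n` has locality `r`: every coordinate `i` has a recovery set `S` of at most `r`
other coordinates such that any two codewords agreeing on `S` agree at `i`. -/
def HasLocality {F : Type} [Field F] {n : ℕ} (C : Submodule F (Fin n → F)) (r : ℕ) : Prop :=
  ∀ i : Fin n, ∃ S : Finset (Fin n), i ∉ S ∧ S.card ≤ r ∧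
    ∀ c ∈ C, ∀ c' ∈ C, (∀ j ∈ S, c j = c' j) → c i = c' i

/-- There exists a linear `[n,k,d]_q` code (over some field with `q` elements). -/
def CodeExists (q n k d : ℕ) : Prop :=
  ∃ (F : Type) (_ : Field F), Nat.card F = q ∧
    ∃ C : Submodule F (Fin n → F), IsCode k d C

/-- There exists a linear `[n,k,d]_q` code with locality `r`. -/
def LRCExists (q n k d r : ℕ) : Prop :=
  ∃ (F : Type) (_ : Field F), Nat.card F = q ∧
    ∃ C : Submodule F (Fin n → F), IsCode k d C ∧ HasLocality C r

/-- `n_q(k,d)`: the smallest length of a linear `[n,k,d]_q` code. -/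
noncomputable def nCode (q k d : ℕ) : ℕ := sInf {n | CodeExists q n k d}

/-- `n_q(k,d,r)`: the smallest length of a linear `[n,k,d]_q` code with locality `r`. -/
noncomputable def nLRC (q k d r : ℕ) : ℕ := sInf {n | LRCExists q n k d r}

/-- There exists an `[n,k]_q` code with locality `r` (no condition on minimum distance). -/
def LRCExistsNoDist (q n k r : ℕ) : Prop :=
  ∃ (F : Type) (_ : Field F), Nat.card F = q ∧
    ∃ C : Submodule F (Fin n → F), Module.finrank F ↥C = k ∧ HasLocality C r

/-- `n'_q(k,r)`: the smallest length of an `[n,k]_q` code with locality `r`. -/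
noncomputable def nLRCNoDist (q k r : ℕ) : ℕ := sInf {n | LRCExistsNoDist q n k r}

/-- The dual code of `C`. -/
def dualCode {F : Type} [Field F] {n : ℕ} (C : Submodule F (Fin n → F)) : Set (Fin n → F) :=
  {x | ∀ c ∈ C, ∑ j, x j * c j = 0}

/-- `C` is projective: non-degenerate and no two coordinates are proportional. -/
def IsProjective {F : Type} [Field F] {n : ℕ} (C : Submodule F (Fin n → F)) : Prop :=
  (∀ i : Fin n, ∃ c ∈ C, c i ≠ 0) ∧
    (∀ i j : Fin n, i ≠ j → ∀ lam : F, lam ≠ 0 → ∃ c ∈ C, c i ≠ lam * c j)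

/-- The Griesmer bound `g_q(k,d) = ∑_{i=0}^{k-1} ⌈d/q^i⌉`. -/
noncomputable def griesmer (q k d : ℕ) : ℕ :=
  ∑ i ∈ Finset.range k, ⌈(d : ℚ) / (q : ℚ) ^ i⌉₊

/-!
The generator matrix of a `2`-dimensional code has its columns in `F²`, and up to scaling they are
points of the projective line `PG(1, q)`, which has `q + 1` points. Locality `1` says that each
column is proportional to another one, and a nonzero codeword vanishes only on the columns lying
over one point. So codes are built by listing points of `PG(1, q)` cyclically, each at least
twice: `⌈d/2⌉ + 1` points twice each when `d < 2q`, and all `q + 1` points about `⌈d/q⌉` times each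
otherwise. Conversely, a nonzero codeword vanishing on a coordinate also vanishes on its repair
partner, so `n ≥ d + 2`; when `n = d + 2` the coordinates split into pairs with a common zero set,
so `n` is even. For large `d` the Griesmer bound `n ≥ d + ⌈d/q⌉`, obtained by counting the zeros
of all codewords, is already attained.
-/
open Finset

lemma nLRC_eq_of_forall_le {q n k d r : ℕ} (h : LRCExists q n k d r)
    (hmin : ∀ m, LRCExists q m k d r → n ≤ m) : nLRC q k d r = n :=
  le_antisymm (Nat.sInf_le h) (le_csInf ⟨n, h⟩ hmin)

lemma natCeil_div_le_iff {q : ℕ} (hq : 0 < q) (d m : ℕ) :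
    ⌈(d : ℚ) / q⌉₊ ≤ m ↔ d ≤ q * m := by
  rw [Nat.ceil_le, div_le_iff₀ (by exact_mod_cast hq)]
  norm_cast
  rw [mul_comm]

section Weight

variable {F : Type} [Field F] {n : ℕ}

lemma hamWt_add_card_zeros (c : Fin n → F) : hamWt c + #{i | c i = 0} = n := by
  simpa [hamWt] using card_filter_add_card_filter_not (s := univ) (fun i => c i ≠ 0)

lemma IsCode.card_zeros_add_le {k d : ℕ} {C : Submodule F (Fin n → F)} (hC : IsCode k d C)
    {c : Fin n → F} (hc : c ∈ C) (hc0 : c ≠ 0) : #{i | c i = 0} + d ≤ n := by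
  have := hC.2 c hc hc0
  have := hamWt_add_card_zeros c
  omega

end Weight

section LineCode

variable {F : Type} [Field F] {n : ℕ}

/-- The point `x` of the projective line `F ∪ {∞}` (with `∞ = none`) as a linear form on `F²`. -/
def lineForm : Option F → (F × F) →ₗ[F] F
  | some x => LinearMap.fst F F F + x • LinearMap.snd F F F
  | none => LinearMap.snd F F F

lemma eq_zero_of_lineForm_eq_zero {x y : Option F} (hxy : x ≠ y) {v : F × F}
    (hx : lineForm x v = 0) (hy : lineForm y v = 0) : v = 0 := by
  obtain ⟨a, b⟩ := v
  suffices hb : b = 0 by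
    cases x <;> cases y <;> simp_all [lineForm]
  cases x <;> cases y <;> simp_all [lineForm]
  rename_i x y
  have : (x - y) * b = 0 := by linear_combination hx - hy
  simpa [sub_eq_zero, hxy] using this

/-- The code whose generator matrix has the points `g i` of the projective line as columns. -/
def lineCode (g : Fin n → Option F) : Submodule F (Fin n → F) :=
  LinearMap.range (LinearMap.pi fun i => lineForm (g i))

variable {g : Fin n → Option F}

lemma finrank_lineCode (hg : ∃ i j, g i ≠ g j) : Module.finrank F (lineCode g) = 2 := by
  obtain ⟨i, j, hij⟩ := hg
  have hinj : Function.Injective (LinearMap.pi fun i => lineForm (g i)) := by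
    rw [← LinearMap.ker_eq_bot, LinearMap.ker_eq_bot']
    intro v hv
    exact eq_zero_of_lineForm_eq_zero hij (congrFun hv i) (congrFun hv j)
  rw [lineCode, LinearMap.finrank_range_of_inj hinj, Module.finrank_prod, Module.finrank_self]

lemma isCode_lineCode {d : ℕ} (hg : ∃ i j, g i ≠ g j) (hfib : ∀ p, #{i | g i = p} + d ≤ n) :
    IsCode 2 d (lineCode g) := by
  refine ⟨finrank_lineCode hg, ?_⟩
  rintro _ ⟨v, rfl⟩ hv
  set c := (LinearMap.pi fun i => lineForm (g i)) v
  obtain ⟨p, hp⟩ : ∃ p, #{i | c i = 0} ≤ #{i | g i = p} := by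
    obtain hempty | ⟨i₀, hi₀⟩ := eq_empty_or_nonempty {i | c i = 0}
    · exact ⟨none, by rw [hempty]; exact Nat.zero_le _⟩
    refine ⟨g i₀, card_le_card fun i hi => ?_⟩
    simp only [mem_filter, mem_univ, true_and] at hi hi₀ ⊢
    by_contra hne
    exact hv (by simp only [c, eq_zero_of_lineForm_eq_zero hne hi hi₀, map_zero])
  have := hamWt_add_card_zeros c
  have := hfib p
  omega

lemma hasLocality_lineCode (hpair : ∀ i, ∃ j ≠ i, g j = g i) : HasLocality (lineCode g) 1 := by
  intro i
  obtain ⟨j, hji, hgj⟩ := hpair i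
  refine ⟨{j}, by simpa using hji.symm, by simp, ?_⟩
  rintro _ ⟨v, rfl⟩ _ ⟨v', rfl⟩ h
  simpa [hgj] using h j (mem_singleton_self j)

end LineCode

section ModCode

lemma card_le_of_mod_eq {n M m : ℕ} (hM : 0 < M) (hn : n ≤ M * m) {s : Finset (Fin n)}
    (hs : ∀ a ∈ s, ∀ b ∈ s, (a : ℕ) % M = b % M) : #s ≤ m := by
  calc #s ≤ #(range m) := by
        refine card_le_card_of_injOn (fun i => (i : ℕ) / M) (fun i _ => ?_) fun a ha b hb hab => ?_
        · rw [coe_range, Set.mem_Iio, Nat.div_lt_iff_lt_mul hM]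
          linarith [i.2]
        · exact Fin.ext <| by
            rw [← Nat.div_add_mod a M, ← Nat.div_add_mod b M, hs a ha b hb,
              show (a : ℕ) / M = b / M from hab]
    _ = m := card_range m

lemma exists_ne_mod_eq {n M : ℕ} (hM : 0 < M) (h2M : 2 * M ≤ n) (i : Fin n) :
    ∃ j ≠ i, (j : ℕ) % M = i % M := by
  by_cases h : (i : ℕ) + M < n
  · exact ⟨⟨i + M, h⟩, by simp [Fin.ext_iff]; omega, Nat.add_mod_right _ _⟩
  · refine ⟨⟨i - M, by omega⟩, by simp [Fin.ext_iff]; omega, ?_⟩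
    conv_rhs => rw [← Nat.sub_add_cancel (by omega : M ≤ i), Nat.add_mod_right]

theorem exists_isCode_two_hasLocality_one {F : Type} [Field F] [Fintype F] {n d M m : ℕ}
    (hM : 2 ≤ M) (hMF : M ≤ Fintype.card F + 1) (h2M : 2 * M ≤ n) (hn : n ≤ M * m)
    (hm : d + m ≤ n) : ∃ C : Submodule F (Fin n → F), IsCode 2 d C ∧ HasLocality C 1 := by
  obtain ⟨e⟩ : Nonempty (Fin M ↪ Option F) :=
    Function.Embedding.nonempty_of_card_le (by simpa using hMF)
  let g : Fin n → Option F := fun i => e ⟨i % M, Nat.mod_lt _ (by omega)⟩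
  have hg : ∀ i j, g i = g j ↔ (i : ℕ) % M = j % M := fun _ _ =>
    e.injective.eq_iff.trans Fin.ext_iff
  refine ⟨lineCode g, isCode_lineCode ?_ fun p => ?_, hasLocality_lineCode fun i => ?_⟩
  · refine ⟨⟨0, by omega⟩, ⟨1, by omega⟩, ?_⟩
    rw [Ne, hg, Nat.zero_mod, Nat.one_mod_eq_one.mpr (by omega)]
    exact zero_ne_one
  · have := card_le_of_mod_eq (by omega) hn (s := {i | g i = p}) fun a ha b hb => by
      simp only [mem_filter, mem_univ, true_and] at ha hb
      exact (hg a b).1 (ha.trans hb.symm)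
    omega
  · obtain ⟨j, hji, hj⟩ := exists_ne_mod_eq (by omega) h2M i
    exact ⟨j, hji, (hg j i).2 hj⟩

end ModCode

section LowerBound

variable {F : Type} [Field F] {n d : ℕ} {C : Submodule F (Fin n → F)}

lemma exists_apply_ne_zero (hC : Module.finrank F C ≠ 0) : ∃ i, ∃ c ∈ C, c i ≠ 0 := by
  by_contra! h
  exact hC (by rw [(Submodule.eq_bot_iff C).2 fun c hc => funext fun i => h i c hc, finrank_bot])

def coordForm (C : Submodule F (Fin n → F)) (i : Fin n) : Module.Dual F C :=
  (LinearMap.proj i).comp C.subtype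

lemma mem_ker_coordForm {i : Fin n} {v : C} :
    v ∈ LinearMap.ker (coordForm C i) ↔ (v : Fin n → F) i = 0 := Iff.rfl

lemma exists_ne_zero_apply_eq_zero (hC : 1 < Module.finrank F C) (i : Fin n) :
    ∃ c ∈ C, c ≠ 0 ∧ c i = 0 := by
  have : FiniteDimensional F C := Module.finite_of_finrank_pos (by omega)
  obtain ⟨v, hv, hv0⟩ := Submodule.ne_bot_iff _ |>.1 <|
    LinearMap.ker_ne_bot_of_finrank_lt (f := coordForm C i) (by rwa [Module.finrank_self])
  exact ⟨v, v.2, by simpa using hv0, hv⟩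

lemma HasLocality.exists_partner (hl : HasLocality C 1) {i : Fin n} (hi : ∃ c ∈ C, c i ≠ 0) :
    ∃ j ≠ i, ∀ c ∈ C, c j = 0 → c i = 0 := by
  obtain ⟨S, hiS, hS, hrec⟩ := hl i
  have : Nonempty (Fin n) := ⟨i⟩
  obtain ⟨j, hSj⟩ := card_le_one_iff_subset_singleton.1 hS
  have hrec0 : ∀ c ∈ C, c j = 0 → c i = 0 := fun c hc hcj =>
    hrec c hc 0 C.zero_mem fun k hk => by rw [mem_singleton.1 (hSj hk)]; exact hcj
  refine ⟨j, fun hji => ?_, hrec0⟩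
  obtain ⟨c, hc, hci⟩ := hi
  exact hci (hrec c hc 0 C.zero_mem fun k hk =>
    (hiS (by rwa [← hji, ← mem_singleton.1 (hSj hk)])).elim)

theorem IsCode.add_two_le_of_hasLocality_one (hC : IsCode 2 d C) (hl : HasLocality C 1) :
    d + 2 ≤ n := by
  obtain ⟨i, hi⟩ := exists_apply_ne_zero (C := C) (by rw [hC.1]; omega)
  obtain ⟨j, hji, hj⟩ := hl.exists_partner hi
  obtain ⟨c, hc, hc0, hcj⟩ := exists_ne_zero_apply_eq_zero (by rw [hC.1]; omega) j
  have : 1 < #{k | c k = 0} := one_lt_card.2 ⟨j, by simpa, i, by simpa using hj c hc hcj, hji⟩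
  have := hC.card_zeros_add_le hc hc0
  omega

lemma finrank_ker_coordForm (hC : Module.finrank F C = 2) {i : Fin n} (hi : ∃ c ∈ C, c i ≠ 0) :
    Module.finrank F (LinearMap.ker (coordForm C i)) = 1 := by
  have : FiniteDimensional F C := Module.finite_of_finrank_pos (by omega)
  obtain ⟨c, hc, hci⟩ := hi
  have := Module.Dual.finrank_ker_add_one_of_ne_zero (f := coordForm C i)
    fun h => hci (LinearMap.congr_fun h ⟨c, hc⟩)
  omega

lemma IsCode.card_zeros_le_two (hC : IsCode 2 d C) (hn : n ≤ d + 2) {c : Fin n → F}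
    (hc : c ∈ C) (hc0 : c ≠ 0) : #{k | c k = 0} ≤ 2 := by
  have := hC.card_zeros_add_le hc hc0
  omega

lemma IsCode.exists_apply_ne_zero_of_hasLocality_one (hC : IsCode 2 d C) (hl : HasLocality C 1)
    (hn : n ≤ d + 2) (i' : Fin n) : ∃ c ∈ C, c i' ≠ 0 := by
  -- otherwise `i'` is a third zero of a nonzero codeword vanishing on a repair pair `i, j`
  by_contra! hdeg
  obtain ⟨i, hi⟩ := exists_apply_ne_zero (C := C) (by rw [hC.1]; omega)
  obtain ⟨j, hji, hj⟩ := hl.exists_partner hi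
  obtain ⟨c, hc, hc0, hcj⟩ := exists_ne_zero_apply_eq_zero (by rw [hC.1]; omega) j
  obtain ⟨c₀, hc₀, hc₀i⟩ := hi
  have hii' : i ≠ i' := by rintro rfl; exact hc₀i (hdeg c₀ hc₀)
  have hji' : j ≠ i' := by rintro rfl; exact hc₀i (hj c₀ hc₀ (hdeg c₀ hc₀))
  have : 2 < #{k | c k = 0} := two_lt_card.2
    ⟨j, by simpa, i, by simpa using hj c hc hcj, i', by simpa using hdeg c hc, hji, hji', hii'⟩
  exact absurd (hC.card_zeros_le_two hn hc hc0) (by omega)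

lemma IsCode.card_ker_coordForm_eq (hC : IsCode 2 d C) (hl : HasLocality C 1) (hn : n ≤ d + 2)
    (i : Fin n) : #{j | LinearMap.ker (coordForm C j) = LinearMap.ker (coordForm C i)} = 2 := by
  have hK := fun j =>
    finrank_ker_coordForm hC.1 (hC.exists_apply_ne_zero_of_hasLocality_one hl hn j)
  refine le_antisymm ?_ ?_
  · obtain ⟨v, hv, hv0⟩ := Submodule.ne_bot_iff _ |>.1 <|
      Submodule.one_le_finrank_iff.1 (hK i).ge
    refine le_trans (card_le_card fun j hj => ?_) (hC.card_zeros_le_two hn v.2 (by simpa using hv0))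
    simp only [mem_filter, mem_univ, true_and] at hj ⊢
    rw [← mem_ker_coordForm, hj]
    exact hv
  · obtain ⟨j, hji, hj⟩ := hl.exists_partner (hC.exists_apply_ne_zero_of_hasLocality_one hl hn i)
    have : LinearMap.ker (coordForm C j) = LinearMap.ker (coordForm C i) :=
      Submodule.eq_of_le_of_finrank_le (fun v hv => hj v v.2 hv) (by rw [hK, hK])
    exact one_lt_card.2 ⟨j, by simpa, i, by simp, hji⟩

theorem IsCode.even_length_of_hasLocality_one (hC : IsCode 2 d C) (hl : HasLocality C 1)
    (hn : n ≤ d + 2) : Even n := by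
  rw [← Fintype.card_fin n, ← card_univ,
    card_eq_sum_card_image (fun i => LinearMap.ker (coordForm C i))]
  refine even_sum _ fun W hW => ?_
  obtain ⟨i, -, rfl⟩ := mem_image.1 hW
  rw [hC.card_ker_coordForm_eq hl hn i]
  exact even_two

end LowerBound

section Griesmer

variable {F : Type} [Field F] [Fintype F] {n d : ℕ} {C : Submodule F (Fin n → F)}

lemma card_le_card_apply_eq_zero (hC : 1 < Module.finrank F C) (i : Fin n) :
    Fintype.card F ≤ #{c : C | (c : Fin n → F) i = 0} := by
  obtain ⟨c, hc, hc0, hci⟩ := exists_ne_zero_apply_eq_zero hC i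
  have hinj : Function.Injective fun a : F => a • (⟨c, hc⟩ : C) :=
    smul_left_injective F (show (⟨c, hc⟩ : C) ≠ 0 by simpa using hc0)
  calc Fintype.card F = #(univ.image fun a : F => a • (⟨c, hc⟩ : C)) :=
        (card_image_of_injective _ hinj).symm
    _ ≤ _ := card_le_card fun v hv => by
        obtain ⟨a, -, rfl⟩ := mem_image.1 hv
        simp [hci]

theorem IsCode.card_add_one_mul_le (hC : IsCode 2 d C) :
    (Fintype.card F + 1) * d ≤ Fintype.card F * n := by
  set q := Fintype.card F
  have hq : 1 < q := Fintype.one_lt_card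
  have hcard : Fintype.card C = q ^ 2 := by rw [Module.card_eq_pow_finrank (K := F), hC.1]
  have hweight : q ^ 2 * d ≤ ∑ c : C, hamWt (c : Fin n → F) + d := by
    calc q ^ 2 * d = ∑ c ∈ univ.erase (0 : C), d + d := by
          rw [sum_const, card_erase_of_mem (mem_univ _), card_univ, hcard, smul_eq_mul,
            ← add_one_mul, Nat.sub_add_cancel (Nat.one_le_pow _ _ (by omega))]
      _ ≤ ∑ c : C, hamWt (c : Fin n → F) + d := by
          gcongr
          refine le_trans (sum_le_sum fun c hc => hC.2 c c.2 (by simpa using hc)) ?_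
          exact sum_le_sum_of_subset (erase_subset _ _)
  have hcount : ∑ c : C, hamWt (c : Fin n → F) = ∑ i, #{c : C | (c : Fin n → F) i ≠ 0} := by
    simp only [hamWt, card_filter]
    exact sum_comm
  have hcoord : ∀ i, #{c : C | (c : Fin n → F) i ≠ 0} + q ≤ q ^ 2 := fun i => by
    have h := card_filter_add_card_filter_not (s := univ) fun c : C => (c : Fin n → F) i ≠ 0
    have := card_le_card_apply_eq_zero (by rw [hC.1]; omega) i
    simp only [not_not, card_univ, hcard] at h
    omega
  have : ∑ i : Fin n, (#{c : C | (c : Fin n → F) i ≠ 0} + q) ≤ n * q ^ 2 := by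
    simpa using sum_le_sum fun i (_ : i ∈ univ) => hcoord i
  rw [sum_add_distrib, sum_const, card_univ, Fintype.card_fin, smul_eq_mul, ← hcount] at this
  nlinarith

end Griesmer

theorem lrcExists_two_one {q n d M m : ℕ} (hq : IsPrimePow q) (hM : 2 ≤ M) (hMq : M ≤ q + 1)
    (h2M : 2 * M ≤ n) (hn : n ≤ M * m) (hm : d + m ≤ n) : LRCExists q n 2 d 1 := by
  obtain ⟨p, k, hp, hk, rfl⟩ := hq
  have : Fact p.Prime := ⟨hp.nat_prime⟩
  have : Fintype (GaloisField p k) := Fintype.ofFinite _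
  have hcard : Nat.card (GaloisField p k) = p ^ k := GaloisField.card p k hk.ne'
  refine ⟨GaloisField p k, inferInstance, hcard, exists_isCode_two_hasLocality_one hM ?_ h2M hn hm⟩
  rwa [← Nat.card_eq_fintype_card, hcard]

theorem LRCExists.two_mul_add_two_le {q n d : ℕ} (h : LRCExists q n 2 d 1) :
    2 * ((d + 1) / 2) + 2 ≤ n := by
  obtain ⟨F, _, -, C, hC, hl⟩ := h
  have := hC.add_two_le_of_hasLocality_one hl
  by_cases hn : n ≤ d + 2
  · have := Nat.even_iff.1 (hC.even_length_of_hasLocality_one hl hn)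
    omega
  · omega

theorem LRCExists.add_natCeil_div_le {q n d r : ℕ} (hq : 0 < q) (h : LRCExists q n 2 d r) :
    d + ⌈(d : ℚ) / q⌉₊ ≤ n := by
  obtain ⟨F, _, hF, C, hC, -⟩ := h
  have : Finite F := Nat.finite_of_card_ne_zero (by omega)
  have := Fintype.ofFinite F
  rw [Nat.card_eq_fintype_card] at hF
  have hgr : q * d + d ≤ q * n := by simpa [← hF, add_one_mul] using hC.card_add_one_mul_le
  have : d ≤ n := by nlinarith
  have := (natCeil_div_le_iff hq d (n - d)).2 (by rw [Nat.mul_sub]; omega)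
  omega

theorem n_dim2_r1 (q d : ℕ) (hq : IsPrimePow q) (hd : 1 ≤ d) :
    (d < 2 * q → nLRC q 2 d 1 = 2 * ⌈(d : ℚ) / 2⌉₊ + 2) ∧
    (2 * q ≤ d → nLRC q 2 d 1 = d + ⌈(d : ℚ) / (q : ℚ)⌉₊) := by
  refine ⟨fun hlt => ?_, fun hge => ?_⟩
  · have hc : ∀ k, ⌈(d : ℚ) / 2⌉₊ ≤ k ↔ d ≤ 2 * k := by
      exact_mod_cast natCeil_div_le_iff two_pos d
    have := (hc _).1 le_rfl
    have := (hc ((d + 1) / 2)).2 (by omega)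
    refine nLRC_eq_of_forall_le (lrcExists_two_one hq (M := ⌈(d : ℚ) / 2⌉₊ + 1) (m := 2)
      (by omega) (by omega) (by omega) (by omega) (by omega)) fun n hn => ?_
    have := hn.two_mul_add_two_le
    omega
  · have := hq.two_le
    have hm := natCeil_div_le_iff hq.pos d
    have := (hm _).1 le_rfl
    have := (hm 1).not.2 (by omega)
    refine nLRC_eq_of_forall_le (lrcExists_two_one hq (M := q + 1) (m := ⌈(d : ℚ) / q⌉₊)
      (by omega) le_rfl (by omega) (by linarith) le_rfl) fun n hn => hn.add_natCeil_div_le hq.pos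
end

section
/- Let C be a k-dimensional linear code in F_q^n whose dual code C^⊥ has minimum Hamming distance exactly 3. If the number of codewords of C^⊥ of Hamming weight exactly 3 is strictly less than (q-1)·n/3, then C does not have locality 2. -/
open scoped Classical

/-!
If `C` has locality `2`, the recovery set of each coordinate `i` yields a dual codeword of
weight at most `3` that is nonzero at `i`; as the dual distance is `3`, it has weight exactly `3`,
and so do its `q - 1` nonzero multiples. Counting pairs (weight-`3` dual word, coordinate in its
support) gives `3 · #{weight-3 dual words} ≥ (q - 1) n`.
-/

open Finset

section
variable {F : Type} [Field F] {n : ℕ}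

lemma smul_mem_dualCode {C : Submodule F (Fin n → F)} {x : Fin n → F} (hx : x ∈ dualCode C)
    (a : F) : a • x ∈ dualCode C := by
  intro c hc
  simp only [Pi.smul_apply, smul_eq_mul, mul_assoc, ← mul_sum, hx c hc, mul_zero]

lemma hamWt_smul {a : F} (ha : a ≠ 0) (x : Fin n → F) : hamWt (a • x) = hamWt x := by
  simp only [hamWt, Pi.smul_apply, smul_eq_mul, ne_eq, mul_eq_zero, ha, false_or]

lemma hamWt_le_card_of_support_subset {x : Fin n → F} {s : Finset (Fin n)}
    (hs : ∀ j, x j ≠ 0 → j ∈ s) : hamWt x ≤ #s :=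
  card_le_card fun j hj => hs j (mem_filter.1 hj).2

lemma sum_hamWt_eq_sum_card_filter (T : Finset (Fin n → F)) :
    ∑ x ∈ T, hamWt x = ∑ i, #(T.filter fun x => x i ≠ 0) := by
  simp only [hamWt, card_filter]
  exact sum_comm

lemma exists_mem_dualCode_of_recovery {C : Submodule F (Fin n → F)} {i : Fin n}
    {S : Finset (Fin n)} (hi : i ∉ S)
    (hS : ∀ c ∈ C, ∀ c' ∈ C, (∀ j ∈ S, c j = c' j) → c i = c' i) :
    ∃ x ∈ dualCode C, x i ≠ 0 ∧ ∀ j, x j ≠ 0 → j ∈ insert i S := by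
  -- On `C`, the evaluation at `i` vanishes wherever those at `S` do, so it is a combination
  -- `∑ a j • ev j`; the dual word is then `∑ a j • e_j - e_i`.
  let ev : Fin n → (C →ₗ[F] F) := fun j => (LinearMap.proj j).comp C.subtype
  have hker : ⨅ j : S, LinearMap.ker (ev j) ≤ LinearMap.ker (ev i) := by
    intro c hc
    simp only [Submodule.mem_iInf, LinearMap.mem_ker] at hc ⊢
    exact hS c c.2 0 C.zero_mem fun j hj => hc ⟨j, hj⟩
  obtain ⟨a, ha⟩ := (Submodule.mem_span_range_iff_exists_fun F).1
    (mem_span_of_iInf_ker_le_ker (L := fun j : S => ev j) hker)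
  refine ⟨∑ j : S, a j • Pi.single (j : Fin n) 1 - Pi.single i 1, ?_, ?_, ?_⟩
  · intro c hc
    have hci : ∑ j : S, a j * c j = c i := by simpa [ev] using LinearMap.congr_fun ha ⟨c, hc⟩
    change (_ ⬝ᵥ c) = 0
    simp only [sub_dotProduct, sum_dotProduct, smul_dotProduct, single_dotProduct, one_mul,
      smul_eq_mul, hci, sub_self]
  · have hS' : ∀ j : S, (j : Fin n) ≠ i := fun j h => hi (h ▸ j.2)
    simp [Finset.sum_apply, hS']
  · intro j hj
    by_contra hjS
    simp only [mem_insert, not_or] at hjS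
    apply hj
    have hjS' : ∀ s : S, j ≠ s := fun s h => hjS.2 (h ▸ s.2)
    simp [Finset.sum_apply, hjS.1, hjS']

lemma exists_mem_dualCode_hamWt_le_of_hasLocality {C : Submodule F (Fin n → F)} {r : ℕ}
    (hC : HasLocality C r) (i : Fin n) :
    ∃ x ∈ dualCode C, x i ≠ 0 ∧ hamWt x ≤ r + 1 := by
  obtain ⟨S, hi, hSr, hS⟩ := hC i
  obtain ⟨x, hx, hxi, hsupp⟩ := exists_mem_dualCode_of_recovery hi hS
  refine ⟨x, hx, hxi, ?_⟩
  calc hamWt x ≤ #(insert i S) := hamWt_le_card_of_support_subset hsupp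
    _ = #S + 1 := card_insert_of_notMem hi
    _ ≤ r + 1 := by omega

lemma card_le_card_filter_ne_zero_add_one [Fintype F] {T : Finset (Fin n → F)}
    (hT : ∀ a : F, a ≠ 0 → ∀ x ∈ T, a • x ∈ T) {x : Fin n → F} (hx : x ∈ T) {i : Fin n}
    (hxi : x i ≠ 0) : Fintype.card F ≤ #(T.filter fun y => y i ≠ 0) + 1 := by
  have hmaps : ∀ a ∈ (univ : Finset F).erase 0, a • x ∈ T.filter fun y => y i ≠ 0 := by
    intro a ha
    have ha0 := ne_of_mem_erase ha
    simp [hT a ha0 x hx, ha0, hxi]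
  have hinj : Set.InjOn (fun a : F => a • x) ((univ : Finset F).erase 0) :=
    fun a _ b _ hab => mul_right_cancel₀ hxi (congrFun hab i)
  have := card_le_card_of_injOn _ hmaps hinj
  rw [card_erase_of_mem (mem_univ 0), card_univ] at this
  omega

end

theorem few_weight3_dual_words_no_locality_2_general (q n : ℕ)
    (F : Type) [Field F] [Fintype F] (hF : Fintype.card F = q)
    (C : Submodule F (Fin n → F))
    (hmin3 : ∀ x ∈ dualCode C, x ≠ 0 → 3 ≤ hamWt x)
    (hcount : (Nat.card {x : Fin n → F // x ∈ dualCode C ∧ hamWt x = 3} : ℚ) <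
      ((q : ℚ) - 1) * (n : ℚ) / 3) :
    ¬ HasLocality C 2 := by
  intro hloc
  set T := univ.filter fun x : Fin n → F => x ∈ dualCode C ∧ hamWt x = 3
  have hT : ∀ a : F, a ≠ 0 → ∀ x ∈ T, a • x ∈ T := fun a ha x hx => by
    simp only [T, mem_filter, mem_univ, true_and] at hx ⊢
    exact ⟨smul_mem_dualCode hx.1 a, (hamWt_smul ha x).trans hx.2⟩
  have hcover : ∀ i, ∃ x ∈ T, x i ≠ 0 := fun i => by
    obtain ⟨x, hx, hxi, hwt⟩ := exists_mem_dualCode_hamWt_le_of_hasLocality hloc i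
    have hx3 : hamWt x = 3 := le_antisymm hwt (hmin3 x hx fun h => hxi (by simp [h]))
    exact ⟨x, by simp [T, hx, hx3], hxi⟩
  have hdouble : n * q ≤ 3 * #T + n := calc
    n * q = ∑ _i : Fin n, Fintype.card F := by simp [hF, mul_comm]
    _ ≤ ∑ i, (#(T.filter fun x => x i ≠ 0) + 1) := sum_le_sum fun i _ => by
      obtain ⟨x, hx, hxi⟩ := hcover i
      exact card_le_card_filter_ne_zero_add_one hT hx hxi
    _ = ∑ x ∈ T, hamWt x + n := by simp [sum_add_distrib, sum_hamWt_eq_sum_card_filter]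
    _ = 3 * #T + n := by rw [sum_congr rfl fun x hx => (mem_filter.1 hx).2.2]; simp [mul_comm]
  have hcard : Nat.card {x : Fin n → F // x ∈ dualCode C ∧ hamWt x = 3} = #T := by
    rw [Nat.card_eq_fintype_card, Fintype.card_subtype]
  rw [hcard] at hcount
  have : (n : ℚ) * q ≤ 3 * #T + n := by exact_mod_cast hdouble
  linarith

theorem few_weight3_dual_words_no_locality_2 (q n k : ℕ) (hq : IsPrimePow q)
    (F : Type) [Field F] [Fintype F] (hF : Fintype.card F = q)
    (C : Submodule F (Fin n → F)) (hk : Module.finrank F ↥C = k)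
    (hmin3 : ∀ x ∈ dualCode C, x ≠ 0 → 3 ≤ hamWt x)
    (hex3 : ∃ x ∈ dualCode C, hamWt x = 3)
    (hcount : (Nat.card {x : Fin n → F // x ∈ dualCode C ∧ hamWt x = 3} : ℚ) <
      ((q : ℚ) - 1) * (n : ℚ) / 3) :
    ¬ HasLocality C 2 :=
  few_weight3_dual_words_no_locality_2_general q n F hF C hmin3 hcount
end

section
/- For each integer k ≥ 2 one has n_2(k, 2^{k-2}, 2) ≥ 2^{k-1} + 1; that is, there is no binary linear code of length at most 2^{k-1}, dimension k, minimum Hamming distance at least 2^{k-2}, and locality 2. -/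
set_option maxHeartbeats 1000000


open scoped Classical

lemma two_cases {F : Type} [Field F] (hF : Nat.card F = 2) (x : F) : x = 0 ∨ x = 1 := by
  have hFin : Finite F := Nat.finite_of_card_ne_zero (by omega)
  by_contra h
  push_neg at h
  letI : Fintype F := Fintype.ofFinite F
  have hc : Fintype.card F = 2 := by rw [← Nat.card_eq_fintype_card, hF]
  have h0 : (0:F) ∉ ({1, x} : Finset F) := by
    simp only [Finset.mem_insert, Finset.mem_singleton]
    push_neg
    exact ⟨fun h' => zero_ne_one h', fun h' => h.1 h'.symm⟩
  have h1 : (1:F) ∉ ({x} : Finset F) := by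
    simp only [Finset.mem_singleton]
    exact fun h' => h.2 h'.symm
  have h3 : ({0,1,x} : Finset F).card = 3 := by
    rw [Finset.card_insert_of_notMem h0, Finset.card_insert_of_notMem h1,
      Finset.card_singleton]
  have h4 := Finset.card_le_univ ({0,1,x} : Finset F)
  rw [hc, h3] at h4
  omega

lemma one_one {F : Type} [Field F] (hF : Nat.card F = 2) : (1:F) + 1 = 0 := by
  rcases two_cases hF (1+1) with h | h
  · exact h
  · have h1 : (1:F) + 1 = 1 + 0 := by rw [add_zero]; exact h
    exact absurd (add_left_cancel h1) one_ne_zero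

noncomputable def eps {F : Type} [Field F] (x : F) : ℤ := if x = 0 then 1 else -1

lemma eps_add_one {F : Type} [Field F] (hF : Nat.card F = 2) (x : F) :
    eps (x + 1) = - eps x := by
  rcases two_cases hF x with h | h <;> subst h <;> simp [eps, one_one hF]

lemma sum_eps {F : Type} [Field F] {n : ℕ} (v : Fin n → F) :
    ∑ t, eps (v t) = (n : ℤ) - 2 * (hamWt v : ℤ) := by
  have h : ∀ t, eps (v t) = 1 - 2 * (if v t ≠ 0 then (1:ℤ) else 0) := by
    intro t; unfold eps; by_cases h : v t = 0 <;> simp [h]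
  rw [Finset.sum_congr rfl fun t _ => h t, Finset.sum_sub_distrib, Finset.sum_const,
    ← Finset.mul_sum, Finset.sum_boole, hamWt]
  simp [mul_comm]

lemma no_code (k n : ℕ) (hk : 2 ≤ k) (hn : n ≤ 2 ^ (k - 1)) :
    ¬ LRCExists 2 n k (2 ^ (k - 2)) 2 := by
  rintro ⟨F, _, hF, C, ⟨hrank, hdist⟩, hloc⟩
  have hFin : Finite F := Nat.finite_of_card_ne_zero (by omega)
  letI : Fintype F := Fintype.ofFinite F
  have hc2 : Fintype.card F = 2 := by rw [← Nat.card_eq_fintype_card, hF]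
  have hkn : k ≤ n := by
    have h1 : Module.finrank F ↥C ≤ Module.finrank F (Fin n → F) := C.finrank_le
    rwa [hrank, Module.finrank_pi, Fintype.card_fin] at h1
  have hi : 0 < n := by omega
  set i : Fin n := ⟨0, hi⟩ with hidef
  obtain ⟨S, hiS, hScard, hrec⟩ := hloc i
  let g : ↥C →ₗ[F] (↥S → F) := LinearMap.pi fun j => (LinearMap.proj (j : Fin n)).comp C.subtype
  set K := LinearMap.ker g with hKdef
  letI : Fintype ↥K := Fintype.ofFinite _
  haveI : Nonempty ↥K := ⟨0⟩
  have hKmem : ∀ c : ↥C, c ∈ K ↔ ∀ j ∈ S, (c : Fin n → F) j = 0 := by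
    intro c
    constructor
    · intro h j hj
      have := congrFun (LinearMap.mem_ker.mp h) ⟨j, hj⟩
      simpa [g] using this
    · intro h
      rw [LinearMap.mem_ker]
      funext j
      simpa [g] using h j j.2
  have hvi : ∀ c : ↥C, c ∈ K → (c : Fin n → F) i = 0 := by
    intro c hc
    have := hrec c c.2 0 C.zero_mem (fun j hj => by
      rw [(hKmem c).mp hc j hj]; rfl)
    simpa using this
  -- cardinality of K
  have hcardK : 2 ^ (k - S.card) ≤ Fintype.card ↥K := by
    have hrn := LinearMap.finrank_range_add_finrank_ker g
    have hr : Module.finrank F ↥(LinearMap.range g) ≤ S.card := by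
      have h5 := Submodule.finrank_le (LinearMap.range g)
      rwa [Module.finrank_pi, Fintype.card_coe] at h5
    have hkk : k - S.card ≤ Module.finrank F ↥K := by
      rw [hrank] at hrn; rw [hKdef]; omega
    calc 2 ^ (k - S.card) ≤ 2 ^ Module.finrank F ↥K :=
          Nat.pow_le_pow_right (by norm_num) hkk
      _ = Fintype.card ↥K := by
          rw [Module.card_eq_pow_finrank (K := F) (V := ↥K), hc2]
  set f : ↥K → Fin n → F := fun c => ((c : ↥C) : Fin n → F) with hfdef
  set T : Finset (Fin n) := insert i S with hTdef
  have hTcard : T.card = S.card + 1 := Finset.card_insert_of_notMem hiS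
  have hvT : ∀ t ∈ T, ∀ c : ↥K, f c t = 0 := by
    intro t ht c
    rcases Finset.mem_insert.mp ht with h | h
    · rw [h]; exact hvi c c.2
    · exact (hKmem c).mp c.2 t h
  -- column sums
  have hcol0 : ∀ t : Fin n, (0:ℤ) ≤ ∑ c : ↥K, eps (f c t) := by
    intro t
    by_cases hz : ∀ c : ↥K, f c t = 0
    · have : ∑ c : ↥K, eps (f c t) = Fintype.card ↥K := by
        rw [Finset.sum_congr rfl fun c _ => by rw [hz c]]
        simp [eps]
      rw [this]; exact Int.ofNat_nonneg _
    · push_neg at hz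
      obtain ⟨c₀, hc₀⟩ := hz
      have hc1 : f c₀ t = 1 := by
        rcases two_cases hF (f c₀ t) with h | h
        · exact absurd h hc₀
        · exact h
      have hflip : ∑ c : ↥K, eps (f c t) = - ∑ c : ↥K, eps (f c t) := by
        calc ∑ c : ↥K, eps (f c t) = ∑ c : ↥K, eps (f (c + c₀) t) :=
              (Equiv.sum_comp (Equiv.addRight c₀) (fun c => eps (f c t))).symm
          _ = ∑ c : ↥K, - eps (f c t) := by
              refine Finset.sum_congr rfl fun c _ => ?_
              have : f (c + c₀) t = f c t + 1 := by
                rw [← hc1]; rfl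
              rw [this, eps_add_one hF]
          _ = - ∑ c : ↥K, eps (f c t) := by rw [Finset.sum_neg_distrib]
      omega
  have hcolT : ∀ t ∈ T, ∑ c : ↥K, eps (f c t) = (Fintype.card ↥K : ℤ) := by
    intro t ht
    rw [Finset.sum_congr rfl fun c _ => by rw [hvT t ht c]]
    simp [eps]
  -- lower bound
  have hlow : (T.card : ℤ) * (Fintype.card ↥K : ℤ) ≤ ∑ c : ↥K, ∑ t, eps (f c t) := by
    rw [Finset.sum_comm]
    calc (T.card : ℤ) * (Fintype.card ↥K : ℤ) = ∑ _t ∈ T, (Fintype.card ↥K : ℤ) := by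
          rw [Finset.sum_const, nsmul_eq_mul]
      _ = ∑ t ∈ T, ∑ c : ↥K, eps (f c t) :=
          (Finset.sum_congr rfl fun t ht => (hcolT t ht).symm)
      _ ≤ ∑ t : Fin n, ∑ c : ↥K, eps (f c t) :=
          Finset.sum_le_sum_of_subset_of_nonneg (Finset.subset_univ T)
            (fun t _ _ => hcol0 t)
  -- upper bound
  have hp : (2:ℤ) ^ (k-1) = 2 * 2 ^ (k-2) := by
    have h6 : k - 1 = (k-2) + 1 := by omega
    rw [h6, pow_succ]; ring
  have hup : ∑ c : ↥K, ∑ t, eps (f c t) ≤ (n : ℤ) := by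
    calc ∑ c : ↥K, ∑ t, eps (f c t) ≤ ∑ c : ↥K, (if c = 0 then (n:ℤ) else 0) := by
          refine Finset.sum_le_sum fun c _ => ?_
          rw [sum_eps]
          by_cases h : c = 0
          · rw [if_pos h]
            have : (0:ℤ) ≤ (hamWt (f c) : ℤ) := Int.ofNat_nonneg _
            linarith
          · rw [if_neg h]
            have hne : f c ≠ 0 := by
              intro h0
              apply h
              have : ((c : ↥C) : Fin n → F) = 0 := h0
              ext
              exact congrFun this _
            have hw := hdist (f c) (c : ↥C).2 hne
            have hw' : (2:ℤ)^(k-2) ≤ (hamWt (f c) : ℤ) := by exact_mod_cast hw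
            have hn' : (n:ℤ) ≤ 2^(k-1) := by exact_mod_cast hn
            linarith
      _ = (n : ℤ) := by
          rw [Finset.sum_ite_eq' Finset.univ (0 : ↥K) (fun _ => (n:ℤ))]
          simp
  -- combine
  have hfin : ((S.card + 1) * 2 ^ (k - S.card) : ℤ) ≤ 2 ^ (k-1) := by
    have h7 : ((S.card + 1) * 2 ^ (k - S.card) : ℤ) ≤ (T.card : ℤ) * (Fintype.card ↥K : ℤ) := by
      rw [hTcard]
      push_cast
      have : ((2:ℤ)) ^ (k - S.card) ≤ (Fintype.card ↥K : ℤ) := by exact_mod_cast hcardK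
      nlinarith [Int.ofNat_nonneg (S.card)]
    have hn' : (n:ℤ) ≤ 2^(k-1) := by exact_mod_cast hn
    linarith
  have hfinN : (S.card + 1) * 2 ^ (k - S.card) ≤ 2 ^ (k-1) := by exact_mod_cast hfin
  have hpos : 1 ≤ 2 ^ (k-2) := Nat.one_le_two_pow
  have e1 : 2 ^ (k-1) = 2 * 2 ^ (k-2) := by
    have h6 : k - 1 = (k-2) + 1 := by omega
    rw [h6, pow_succ]; ring
  have e2 : 2 ^ (k - 0) = 4 * 2 ^ (k-2) := by
    have h6 : k - 0 = (k-2) + 2 := by omega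
    rw [h6, pow_add]; ring
  have e3 : 2 ^ (k - 1) = 2 * 2 ^ (k-2) := e1
  interval_cases h : S.card <;> omega

lemma exists_lrc (k : ℕ) (hk : 2 ≤ k) :
    LRCExists 2 (2 ^ (k-1) * k) k (2 ^ (k - 2)) 2 := by
  haveI := Fact.mk Nat.prime_two
  refine ⟨ZMod 2, inferInstance, Nat.card_zmod 2, ?_⟩
  set m := 2 ^ (k-1) with hmdef
  have hm : 2 ≤ m := by
    have : 2 ^ 1 ≤ 2 ^ (k-1) := Nat.pow_le_pow_right (by norm_num) (by omega)
    simpa using this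
  set e : Fin m × Fin k ≃ Fin (m * k) := finProdFinEquiv with hedef
  set L : (Fin k → ZMod 2) →ₗ[ZMod 2] (Fin (m * k) → ZMod 2) :=
    LinearMap.funLeft (ZMod 2) (ZMod 2) (fun i => (e.symm i).2) with hLdef
  have hLapp : ∀ v i, L v i = v (e.symm i).2 := fun v i => rfl
  have hinj : Function.Injective L := by
    intro v w h
    funext b
    have h1 := congrFun h (e (⟨0, by omega⟩, b))
    rw [hLapp, hLapp, Equiv.symm_apply_apply] at h1
    exact h1
  refine ⟨LinearMap.range L, ⟨?_, ?_⟩, ?_⟩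
  · rw [LinearMap.finrank_range_of_inj hinj, Module.finrank_pi, Fintype.card_fin]
  · rintro c ⟨v, rfl⟩ hc0
    have hv : v ≠ 0 := by rintro rfl; exact hc0 (map_zero L)
    obtain ⟨b, hb⟩ : ∃ b, v b ≠ 0 := by
      by_contra h
      push_neg at h
      exact hv (funext h)
    have hsub : ∀ a : Fin m, e (a, b) ∈ Finset.univ.filter (fun t => L v t ≠ 0) := by
      intro a
      rw [Finset.mem_filter]
      refine ⟨Finset.mem_univ _, ?_⟩
      rw [hLapp, Equiv.symm_apply_apply]
      exact hb
    have hinj2 : Set.InjOn (fun a : Fin m => e (a, b)) ↑(Finset.univ : Finset (Fin m)) := by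
      intro a _ a' _ h
      have := e.injective h
      exact (Prod.mk.injEq _ _ _ _).mp this |>.1
    have hcard := Finset.card_le_card_of_injOn (fun a : Fin m => e (a, b))
      (fun a _ => hsub a) hinj2
    rw [Finset.card_univ, Fintype.card_fin] at hcard
    have hfin : (Finset.univ.filter fun t => L v t ≠ 0).card = hamWt (L v) := by
      unfold hamWt
      congr
    calc 2 ^ (k-2) ≤ m := Nat.pow_le_pow_right (by norm_num) (by omega)
      _ ≤ _ := hfin ▸ hcard
  · intro i
    set a : Fin m := (e.symm i).1 with hadef
    set b : Fin k := (e.symm i).2 with hbdef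
    have hi : e (a, b) = i := by
      rw [hadef, hbdef]
      exact e.apply_symm_apply i
    set a' : Fin m := if a = ⟨0, by omega⟩ then ⟨1, by omega⟩ else ⟨0, by omega⟩ with ha'def
    have ha' : a' ≠ a := by
      rw [ha'def]
      split_ifs with h
      · rw [h]; intro hcon; exact absurd (Fin.mk.injEq .. ▸ hcon) (by simp)
      · exact fun hcon => h hcon.symm
    refine ⟨{e (a', b)}, ?_, by simp, ?_⟩
    · rw [Finset.mem_singleton]
      intro h
      apply ha'
      have := e.injective (hi.trans h)
      exact ((Prod.mk.injEq _ _ _ _).mp this).1.symm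
    · rintro c ⟨v, rfl⟩ c' ⟨v', rfl⟩ hagree
      have h1 := hagree (e (a', b)) (Finset.mem_singleton_self _)
      rw [hLapp, hLapp, Equiv.symm_apply_apply] at h1
      rw [hLapp, hLapp, ← hbdef]
      exact h1

theorem n2_reed_muller_r2_lower (k : ℕ) (hk : 2 ≤ k) :
    2 ^ (k - 1) + 1 ≤ nLRC 2 k (2 ^ (k - 2)) 2 ∧
      ∀ n : ℕ, n ≤ 2 ^ (k - 1) → ¬ LRCExists 2 n k (2 ^ (k - 2)) 2 := by
  have hmain : ∀ n : ℕ, n ≤ 2 ^ (k - 1) → ¬ LRCExists 2 n k (2 ^ (k - 2)) 2 :=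
    fun n hn => no_code k n hk hn
  refine ⟨?_, hmain⟩
  rw [nLRC]
  have hne : (2 ^ (k-1) * k) ∈ {n | LRCExists 2 n k (2 ^ (k - 2)) 2} := exists_lrc k hk
  apply le_csInf ⟨_, hne⟩
  intro n hn
  by_contra h
  push_neg at h
  exact hmain n (by omega) hn
end

section
/- For every integer k ≥ 4 one has n_2(k,3,2) ≤ 2k, i.e., there exists a binary linear code of length 2k, dimension k, minimum Hamming distance at least 3, and locality 2. -/
open scoped Classical

namespace N2D3Aux

abbrev F2 := ZMod 2

def succk (k : ℕ) (hk : 0 < k) (p : Fin k) : Fin k := ⟨(p.val + 1) % k, Nat.mod_lt _ hk⟩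

def Gfun (k : ℕ) (hk : 0 < k) (x : Fin k → F2) : Fin (2*k) → F2 :=
  fun i => if h : (i : ℕ) < k then x ⟨i, h⟩
    else x ⟨(i:ℕ) - k, by have := i.isLt; omega⟩ +
      x (succk k hk ⟨(i:ℕ) - k, by have := i.isLt; omega⟩)

lemma Gfun_data (k : ℕ) (hk : 0 < k) (x : Fin k → F2) (j : Fin k) (h2 : (j:ℕ) < 2*k) :
    Gfun k hk x ⟨j, h2⟩ = x j := by
  simp [Gfun, j.isLt]

lemma Gfun_par (k : ℕ) (hk : 0 < k) (x : Fin k → F2) (p : Fin k) (h2 : k + (p:ℕ) < 2*k) :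
    Gfun k hk x ⟨k + p, h2⟩ = x p + x (succk k hk p) := by
  have h : ¬ (k + (p:ℕ) < k) := by omega
  simp [Gfun, h, Nat.add_sub_cancel_left]

def Gmap (k : ℕ) (hk : 0 < k) : (Fin k → F2) →ₗ[F2] (Fin (2*k) → F2) where
  toFun := Gfun k hk
  map_add' x y := by
    funext i; by_cases h : (i:ℕ) < k <;> simp [Gfun, h] <;> ring
  map_smul' c x := by
    funext i; by_cases h : (i:ℕ) < k <;> simp [Gfun, h] <;> ring

lemma Gmap_inj (k : ℕ) (hk : 0 < k) : Function.Injective (Gmap k hk) := by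
  intro x y hxy
  funext j
  have h2 : (j:ℕ) < 2*k := by have := j.isLt; omega
  have := congrFun hxy ⟨j, h2⟩
  simpa [Gmap, Gfun_data k hk _ j h2] using this

lemma exists_step (k : ℕ) (hk : 0 < k) (x : Fin k → F2) (a b : Fin k)
    (ha : x a ≠ 0) (hb : x b = 0) :
    ∃ p, x p ≠ 0 ∧ x (succk k hk p) = 0 := by
  set f : ℕ → Fin k := fun t => ⟨(a.val + t) % k, Nat.mod_lt _ hk⟩ with hf
  have hf0 : f 0 = a := by ext; simp [hf, Nat.mod_eq_of_lt a.isLt]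
  have hstep : ∀ t, f (t+1) = succk k hk (f t) := by
    intro t; ext
    simp only [hf, succk, Nat.mod_add_mod, Nat.add_assoc]
  have hex : ∃ t, x (f t) = 0 := by
    refine ⟨b.val + k - a.val, ?_⟩
    have hfb : f (b.val + k - a.val) = b := by
      ext
      simp only [hf]
      rw [show a.val + (b.val + k - a.val) = b.val + k from by have := a.isLt; omega,
        Nat.add_mod_right, Nat.mod_eq_of_lt b.isLt]
    rw [hfb]; exact hb
  have ht0 : x (f (Nat.find hex)) = 0 := Nat.find_spec hex
  have ht0pos : Nat.find hex ≠ 0 := by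
    intro h
    rw [h, hf0] at ht0
    exact ha ht0
  refine ⟨f (Nat.find hex - 1), ?_, ?_⟩
  · exact Nat.find_min hex (by omega)
  · rw [← hstep, show Nat.find hex - 1 + 1 = Nat.find hex from by omega]
    exact ht0


lemma succk_val_ne (k : ℕ) (hk : 0 < k) (hk2 : 2 ≤ k) (p : Fin k) :
    ((succk k hk p) : ℕ) ≠ (p : ℕ) := by
  simp only [succk]
  rcases Nat.lt_or_ge (p.val + 1) k with h1 | h1
  · rw [Nat.mod_eq_of_lt h1]; omega
  · have he : p.val + 1 = k := by have := p.isLt; omega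
    rw [he, Nat.mod_self]; omega

lemma wt_ge (k : ℕ) (hk4 : 4 ≤ k) (hk : 0 < k) (x : Fin k → F2) (hx : x ≠ 0) :
    3 ≤ hamWt (Gfun k hk x) := by
  obtain ⟨i1, i2, i3, h12, h13, h23, hv1, hv2, hv3⟩ :
      ∃ i1 i2 i3 : Fin (2*k), i1 ≠ i2 ∧ i1 ≠ i3 ∧ i2 ≠ i3 ∧
        Gfun k hk x i1 ≠ 0 ∧ Gfun k hk x i2 ≠ 0 ∧ Gfun k hk x i3 ≠ 0 := by
    by_cases hall : ∀ i, x i ≠ 0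
    · refine ⟨⟨((⟨0, by omega⟩ : Fin k) : ℕ), by omega⟩,
        ⟨((⟨1, by omega⟩ : Fin k) : ℕ), by omega⟩,
        ⟨((⟨2, by omega⟩ : Fin k) : ℕ), by omega⟩, ?_, ?_, ?_, ?_, ?_, ?_⟩
      · simp [Fin.ext_iff]
      · simp [Fin.ext_iff]
      · simp [Fin.ext_iff]
      · rw [Gfun_data k hk x ⟨0, by omega⟩]; exact hall _
      · rw [Gfun_data k hk x ⟨1, by omega⟩]; exact hall _
      · rw [Gfun_data k hk x ⟨2, by omega⟩]; exact hall _
    · push_neg at hall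
      obtain ⟨b, hb⟩ := hall
      obtain ⟨a, ha⟩ : ∃ a, x a ≠ 0 := by
        by_contra hcon
        push_neg at hcon
        exact hx (funext fun i => hcon i)
      obtain ⟨p, hp1, hp2⟩ := exists_step k hk x a b ha hb
      have hxa1 : x a = 1 := by
        have hz : ∀ z : F2, z ≠ 0 → z = 1 := by decide
        exact hz _ ha
      obtain ⟨q, hq1, hq2⟩ := exists_step k hk (fun i => 1 + x i) b a
        (by simp [hb]) (by show (1 : F2) + x a = 0; rw [hxa1]; decide)
      have hxq : x q = 0 := by
        have hz : ∀ z : F2, 1 + z ≠ 0 → z = 0 := by decide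
        exact hz _ hq1
      have hxsq : x (succk k hk q) = 1 := by
        have hz : ∀ z : F2, 1 + z = 0 → z = 1 := by decide
        exact hz _ hq2
      have hpq : (p : ℕ) ≠ (q : ℕ) := by
        intro h
        exact hp1 ((Fin.ext h : p = q) ▸ hxq)
      have hal := a.isLt
      have hpl := p.isLt
      have hql := q.isLt
      refine ⟨⟨(a : ℕ), by omega⟩, ⟨k + (p : ℕ), by omega⟩, ⟨k + (q : ℕ), by omega⟩,
        ?_, ?_, ?_, ?_, ?_, ?_⟩
      · simp only [ne_eq, Fin.mk.injEq]; omega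
      · simp only [ne_eq, Fin.mk.injEq]; omega
      · simp only [ne_eq, Fin.mk.injEq]; omega
      · rw [Gfun_data k hk x a]; exact ha
      · rw [Gfun_par k hk x p, hp2, add_zero]; exact hp1
      · rw [Gfun_par k hk x q, hxq, hxsq]; decide
  unfold hamWt
  have hcard : ({i1, i2, i3} : Finset (Fin (2*k))).card = 3 := by
    rw [Finset.card_insert_of_notMem (by simp [h12, h13]), Finset.card_pair h23]
  refine le_trans (le_of_eq hcard.symm) (Finset.card_le_card ?_)
  intro i hi
  simp only [Finset.mem_insert, Finset.mem_singleton] at hi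
  rcases hi with rfl | rfl | rfl <;> simp [hv1, hv2, hv3]

lemma loc (k : ℕ) (hk4 : 4 ≤ k) (hk : 0 < k) :
    HasLocality (LinearMap.range (Gmap k hk)) 2 := by
  intro i
  by_cases h : (i : ℕ) < k
  · set p : Fin k := ⟨(i : ℕ), h⟩ with hp
    have hsp := succk_val_ne k hk (by omega) p
    have hspl := (succk k hk p).isLt
    refine ⟨{⟨((succk k hk p) : ℕ), by omega⟩, ⟨k + (p : ℕ), by have := p.isLt; omega⟩},
      ?_, ?_, ?_⟩
    · simp only [Finset.mem_insert, Finset.mem_singleton]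
      rintro (h1 | h1) <;>
      · have := congrArg Fin.val h1
        simp only [hp] at this hsp
        omega
    · exact le_trans (Finset.card_insert_le _ _) (by simp)
    · rintro c ⟨x, rfl⟩ c' ⟨x', rfl⟩ hagree
      have h1 := hagree _ (Finset.mem_insert_self _ _)
      have h2 := hagree _ (Finset.mem_insert_of_mem (Finset.mem_singleton_self _))
      simp only [Gmap, LinearMap.coe_mk, AddHom.coe_mk] at h1 h2 ⊢
      rw [Gfun_data k hk x (succk k hk p), Gfun_data k hk x' (succk k hk p)] at h1
      rw [Gfun_par k hk x p, Gfun_par k hk x' p] at h2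
      rw [show i = ⟨(p : ℕ), by have := i.isLt; omega⟩ from by apply Fin.ext; rfl]
      rw [Gfun_data k hk x p, Gfun_data k hk x' p]
      rw [h1] at h2
      exact add_right_cancel h2
  · set p : Fin k := ⟨(i : ℕ) - k, by have := i.isLt; omega⟩ with hp
    have hpl := p.isLt
    have hspl := (succk k hk p).isLt
    refine ⟨{⟨(p : ℕ), by omega⟩, ⟨((succk k hk p) : ℕ), by omega⟩}, ?_, ?_, ?_⟩
    · simp only [Finset.mem_insert, Finset.mem_singleton]
      rintro (h1 | h1) <;>
      · have := congrArg Fin.val h1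
        simp only [hp] at this
        omega
    · exact le_trans (Finset.card_insert_le _ _) (by simp)
    · rintro c ⟨x, rfl⟩ c' ⟨x', rfl⟩ hagree
      have h1 := hagree _ (Finset.mem_insert_self _ _)
      have h2 := hagree _ (Finset.mem_insert_of_mem (Finset.mem_singleton_self _))
      simp only [Gmap, LinearMap.coe_mk, AddHom.coe_mk] at h1 h2 ⊢
      rw [Gfun_data k hk x p, Gfun_data k hk x' p] at h1
      rw [Gfun_data k hk x (succk k hk p), Gfun_data k hk x' (succk k hk p)] at h2
      rw [show i = ⟨k + (p : ℕ), by have := i.isLt; omega⟩ from by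
        apply Fin.ext
        show (i : ℕ) = k + ((i : ℕ) - k)
        omega]
      rw [Gfun_par k hk x p, Gfun_par k hk x' p, h1, h2]

end N2D3Aux

theorem n2_d3_r2_upper (k : ℕ) (hk : 4 ≤ k) :
    nLRC 2 k 3 2 ≤ 2 * k ∧ LRCExists 2 (2 * k) k 3 2 := by
  have hk0 : 0 < k := by omega
  have hex : LRCExists 2 (2 * k) k 3 2 := by
    refine ⟨ZMod 2, inferInstance, by simp [Nat.card_eq_fintype_card],
      LinearMap.range (N2D3Aux.Gmap k hk0), ⟨?_, ?_⟩, N2D3Aux.loc k hk hk0⟩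
    · rw [LinearMap.finrank_range_of_inj (N2D3Aux.Gmap_inj k hk0)]
      exact Module.finrank_fin_fun _
    · rintro c ⟨x, rfl⟩ hc0
      have hx : x ≠ 0 := by
        rintro rfl
        simp at hc0
      exact N2D3Aux.wt_ge k hk hk0 x hx
  exact ⟨Nat.sInf_le hex, hex⟩
end

section
/- Fix a prime power q, an integer k ≥ 1, and an integer d' ≥ 1, and suppose a linear [n',k,d']_q-code exists with n' = n_q(k,d'). Then: (i) n_q(k, 2d', 1) ≤ 2·n_q(k,d'); (ii) n_q(k, d' + 2q^{k-1}, 1) ≤ 2·(q^k - 1)/(q - 1) + n_q(k,d'); and (iii) n_q(k, 3d' - 1, 1) ≤ 3·n_q(k,d') - 1. -/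
open scoped Classical

/-!
Regard a code through the columns of a generator matrix: the codeword of a message `u` has
the entries `⟨col a, u⟩`. If a column reappears (up to a scalar) at another coordinate, that
coordinate repairs it, so every column with a proportional partner has locality one, and
the weight of a codeword is additive over a concatenation of column families. Hence:
(i) taking every column of an optimal `[n, k, d]` code twice gives locality one and weight
`2d`; (ii) two copies of the simplex code (one column per point of `ℙ(F^k)`, all nonzero
codewords of weight `q^(k-1)`) followed by the columns of the code, each of which is a
multiple of a simplex column, give weight `d + 2q^(k-1)`; (iii) two copies of the code
followed by the code punctured at one coordinate give weight at least `3d - 1`.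
-/

section

open Matrix Finset

variable {F : Type} [Field F] {k : ℕ}

section Generator

variable {α β : Type}

/-- Row `a` of `M` is the column of a generator matrix at coordinate `a`, so `M *ᵥ u` is the
codeword of the message `u`. -/
def HasMinWeight [Fintype α] (M : Matrix α (Fin k) F) (d : ℕ) : Prop :=
  ∀ u : Fin k → F, u ≠ 0 → d ≤ #{a | (M *ᵥ u) a ≠ 0}

def HasRepairPartners (M : Matrix α (Fin k) F) : Prop :=
  ∀ a, M a = 0 ∨ ∃ b ≠ a, ∃ c : F, M a = c • M b

theorem isCode_range_mulVecLin {n d : ℕ} {M : Matrix (Fin n) (Fin k) F} (hd : 1 ≤ d)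
    (hM : HasMinWeight M d) : IsCode k d (LinearMap.range M.mulVecLin) := by
  have hinj : Function.Injective M.mulVecLin := by
    rw [← LinearMap.ker_eq_bot, LinearMap.ker_eq_bot']
    intro u hu
    by_contra hne
    have hw := hM u hne
    rw [mulVecLin_apply] at hu
    simp [hu] at hw
    omega
  refine ⟨by rw [LinearMap.finrank_range_of_inj hinj, Module.finrank_fin_fun], ?_⟩
  rintro _ ⟨u, rfl⟩ hc
  exact hM u (by rintro rfl; exact hc (map_zero _))

theorem hasLocality_range_mulVecLin {n : ℕ} {M : Matrix (Fin n) (Fin k) F}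
    (hM : HasRepairPartners M) : HasLocality (LinearMap.range M.mulVecLin) 1 := by
  intro a
  rcases hM a with hzero | ⟨b, hba, c, hab⟩
  · refine ⟨∅, by simp, by simp, ?_⟩
    rintro _ ⟨u, rfl⟩ _ ⟨u', rfl⟩ -
    simp [mulVec, hzero]
  · refine ⟨{b}, by simpa using hba.symm, by simp, ?_⟩
    rintro _ ⟨u, rfl⟩ _ ⟨u', rfl⟩ hagree
    have hb := hagree b (mem_singleton_self b)
    simp only [mulVecLin_apply, mulVec, hab, smul_dotProduct] at hb ⊢
    rw [hb]

theorem HasMinWeight.submatrix_equiv [Fintype α] [Fintype β] {M : Matrix α (Fin k) F} {d : ℕ}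
    (hM : HasMinWeight M d) (e : β ≃ α) : HasMinWeight (M.submatrix e id) d := by
  intro u hu
  refine (hM u hu).trans_eq (card_equiv e.symm fun a => ?_)
  simp only [mem_filter, mem_univ, true_and]
  change _ ↔ (M *ᵥ u) (e (e.symm a)) ≠ 0
  rw [e.apply_symm_apply]

theorem HasRepairPartners.submatrix_equiv {M : Matrix α (Fin k) F} (hM : HasRepairPartners M)
    (e : β ≃ α) : HasRepairPartners (M.submatrix e id) := by
  intro a
  rcases hM (e a) with hzero | ⟨b, hba, c, hab⟩
  · exact Or.inl hzero
  · exact Or.inr ⟨e.symm b, by rintro rfl; simp at hba, c, by ext j; simp [hab]⟩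

theorem lrcExists_of_generator [Fintype α] {q d : ℕ} (hF : Nat.card F = q)
    {M : Matrix α (Fin k) F} (hd : 1 ≤ d) (hw : HasMinWeight M d) (hr : HasRepairPartners M) :
    LRCExists q (Fintype.card α) k d 1 :=
  ⟨F, inferInstance, hF, _, isCode_range_mulVecLin hd (hw.submatrix_equiv _),
    hasLocality_range_mulVecLin (hr.submatrix_equiv (Fintype.equivFin α).symm)⟩

theorem IsCode.exists_hasMinWeight {n d : ℕ} {C : Submodule F (Fin n → F)} (hC : IsCode k d C) :
    ∃ M : Matrix (Fin n) (Fin k) F, HasMinWeight M d := by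
  let b := Module.finBasisOfFinrankEq F C hC.1
  refine ⟨Matrix.of fun j i => (b i : Fin n → F) j, fun u hu => ?_⟩
  have hcode :
      Matrix.of (fun j i => (b i : Fin n → F) j) *ᵥ u = (b.equivFun.symm u : Fin n → F) := by
    ext j
    simp [mulVec, dotProduct, Finset.sum_apply, mul_comm]
  rw [hcode]
  exact hC.2 _ (b.equivFun.symm u).2
    (Submodule.coe_eq_zero.not.mpr ((LinearEquiv.map_ne_zero_iff _).mpr hu))

theorem HasMinWeight.fromRows [Fintype α] [Fintype β] {A : Matrix α (Fin k) F}
    {B : Matrix β (Fin k) F} {d₁ d₂ : ℕ} (hA : HasMinWeight A d₁) (hB : HasMinWeight B d₂) :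
    HasMinWeight (A.fromRows B) (d₁ + d₂) := by
  intro u hu
  have hsplit : #{x | (A.fromRows B *ᵥ u) x ≠ 0} =
      #{a | (A *ᵥ u) a ≠ 0} + #{b | (B *ᵥ u) b ≠ 0} := by
    simp only [← Fintype.card_subtype, fromRows_mulVec]
    rw [Fintype.card_congr Equiv.subtypeSum, Fintype.card_sum]
    rfl
  rw [hsplit]
  exact add_le_add (hA u hu) (hB u hu)

theorem hasRepairPartners_fromRows_self (M : Matrix α (Fin k) F) :
    HasRepairPartners (M.fromRows M) := by
  rintro (a | a)
  · exact Or.inr ⟨Sum.inr a, Sum.inr_ne_inl, 1, (one_smul F _).symm⟩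
  · exact Or.inr ⟨Sum.inl a, Sum.inl_ne_inr, 1, (one_smul F _).symm⟩

theorem HasRepairPartners.fromRows {A : Matrix α (Fin k) F} {B : Matrix β (Fin k) F}
    (hA : HasRepairPartners A) (hB : ∀ b, B b = 0 ∨ ∃ a, ∃ c : F, B b = c • A a) :
    HasRepairPartners (A.fromRows B) := by
  rintro (a | b)
  · rcases hA a with hzero | ⟨a', ha', c, h⟩
    · exact Or.inl hzero
    · exact Or.inr ⟨Sum.inl a', by simpa using ha', c, h⟩
  · rcases hB b with hzero | ⟨a, c, h⟩
    · exact Or.inl hzero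
    · exact Or.inr ⟨Sum.inl a, Sum.inl_ne_inr, c, h⟩

theorem HasMinWeight.submatrix_succ {m d : ℕ} {M : Matrix (Fin (m + 1)) (Fin k) F}
    (hM : HasMinWeight M d) : HasMinWeight (M.submatrix Fin.succ id) (d - 1) := by
  intro u hu
  have hw := hM u hu
  rw [Fin.card_filter_univ_succ'] at hw
  have : ite ((M *ᵥ u) 0 ≠ 0) 1 0 ≤ 1 := by split_ifs <;> simp
  change d - 1 ≤ #{j : Fin m | (M *ᵥ u) j.succ ≠ 0}
  omega

end Generator

section Simplex

open Projectivization
open scoped LinearAlgebra.Projectivization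

variable (F k) in
noncomputable def simplexMatrix : Matrix (ℙ F (Fin k → F)) (Fin k) F := fun p => p.rep

theorem exists_eq_smul_rep_mk {v : Fin k → F} (hv : v ≠ 0) :
    ∃ c : F, v = c • (mk F v hv).rep :=
  ((mk_eq_mk_iff' F _ _ hv (rep_nonzero _)).mp (mk_rep (mk F v hv)).symm).imp fun _ h => h.symm

theorem card_projectivization [Fintype F] [Fintype (ℙ F (Fin k → F))] :
    Fintype.card (ℙ F (Fin k → F)) = (Fintype.card F ^ k - 1) / (Fintype.card F - 1) := by
  simp only [← Nat.card_eq_fintype_card, card'', Nat.card_fun, Nat.card_fin]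

theorem card_dotProduct_ne_zero [Fintype F] {u : Fin k → F} (hu : u ≠ 0) :
    #{v : Fin k → F | u ⬝ᵥ v ≠ 0} = Fintype.card F ^ k - Fintype.card F ^ (k - 1) := by
  set f : Module.Dual F (Fin k → F) := dotProductBilin F F u
  obtain ⟨i, hi⟩ := Function.ne_iff.mp hu
  have hf : f ≠ 0 := fun h => hi (by simpa [f] using LinearMap.congr_fun h (Pi.single i 1))
  have hker : Fintype.card (LinearMap.ker f) = Fintype.card F ^ (k - 1) := by
    have := Module.Dual.finrank_ker_add_one_of_ne_zero hf
    rw [Module.card_eq_pow_finrank (K := F), Module.finrank_fin_fun] at *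
    rw [Module.card_eq_pow_finrank (K := F)]
    congr
    omega
  have hzero : #{v : Fin k → F | u ⬝ᵥ v = 0} = Fintype.card F ^ (k - 1) := by
    rw [← hker, ← Fintype.card_subtype]
    rfl
  have hsplit := card_filter_add_card_filter_not (s := univ) fun v : Fin k → F => u ⬝ᵥ v = 0
  rw [card_univ, Fintype.card_fun, Fintype.card_fin, hzero] at hsplit
  exact Nat.eq_sub_of_add_eq' hsplit

theorem card_simplexMatrix_mulVec_ne_zero [Fintype F] [Fintype (ℙ F (Fin k → F))]
    {u : Fin k → F} (hu : u ≠ 0) :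
    #{p | (simplexMatrix F k *ᵥ u) p ≠ 0} = Fintype.card F ^ (k - 1) := by
  have hk : k ≠ 0 := by rintro rfl; exact hu (Subsingleton.elim _ _)
  have hq : 1 < Fintype.card F := Fintype.one_lt_card
  have hscale (w : {v : Fin k → F // v ≠ 0}) :
      u ⬝ᵥ w.1 ≠ 0 ↔ (simplexMatrix F k *ᵥ u) (mk' F w) ≠ 0 := by
    obtain ⟨c, hc⟩ := exists_eq_smul_rep_mk w.2
    have hc0 : c ≠ 0 := by rintro rfl; exact w.2 (by simpa using hc)
    change _ ↔ (mk F w.1 w.2).rep ⬝ᵥ u ≠ 0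
    generalize (mk F w.1 w.2).rep = r at hc
    rw [dotProduct_comm, hc, smul_dotProduct, smul_eq_mul, mul_ne_zero_iff, and_iff_right hc0]
  -- `nonZeroEquivProjectivizationProdUnits` identifies the nonzero vectors with `ℙ × Fˣ`
  -- through `v ↦ mk v`, and whether `u ⬝ᵥ v` vanishes only depends on `mk v`.
  have hfibres : #{v : Fin k → F | u ⬝ᵥ v ≠ 0} =
      #{p | (simplexMatrix F k *ᵥ u) p ≠ 0} * (Fintype.card F - 1) := by
    simp only [← Fintype.card_subtype, ← Fintype.card_units, ← Fintype.card_prod]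
    exact Fintype.card_congr <|
      (Equiv.subtypeSubtypeEquivSubtype fun h => by rintro rfl; simp at h).symm.trans <|
      ((nonZeroEquivProjectivizationProdUnits F _).subtypeEquiv hscale).trans
      Equiv.prodSubtypeFstEquivSubtypeProd
  rw [card_dotProduct_ne_zero hu] at hfibres
  have hpow : Fintype.card F ^ k - Fintype.card F ^ (k - 1) =
      Fintype.card F ^ (k - 1) * (Fintype.card F - 1) := by
    rw [Nat.mul_sub_one, ← pow_succ, Nat.sub_add_cancel (Nat.one_le_iff_ne_zero.mpr hk)]
  rw [hpow] at hfibres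
  exact (Nat.eq_of_mul_eq_mul_right (by omega) hfibres).symm

end Simplex

section Constructions

open scoped LinearAlgebra.Projectivization

variable {q d : ℕ}

theorem lrcExists_doubled (hF : Nat.card F = q) (hd : 1 ≤ d) {n : ℕ}
    {M : Matrix (Fin n) (Fin k) F} (hM : HasMinWeight M d) :
    LRCExists q (2 * n) k (2 * d) 1 := by
  have h :=
    lrcExists_of_generator hF (by omega) (hM.fromRows hM) (hasRepairPartners_fromRows_self M)
  simpa [two_mul] using h

theorem lrcExists_doubled_simplex_add [Fintype F] (hF : Nat.card F = q) {n : ℕ}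
    {M : Matrix (Fin n) (Fin k) F} (hM : HasMinWeight M d) :
    LRCExists q (2 * ((q ^ k - 1) / (q - 1)) + n) k (d + 2 * q ^ (k - 1)) 1 := by
  have : Fintype (ℙ F (Fin k → F)) := Fintype.ofFinite _
  have hq : Fintype.card F = q := Nat.card_eq_fintype_card.symm.trans hF
  let S := simplexMatrix F k
  have hS : HasMinWeight S (q ^ (k - 1)) := fun u hu =>
    (card_simplexMatrix_mulVec_ne_zero hu).trans (by rw [hq]) |>.ge
  have hSM (j : Fin n) : M j = 0 ∨ ∃ p, ∃ c : F, M j = c • S.fromRows S p := by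
    by_cases hj : M j = 0
    · exact Or.inl hj
    · obtain ⟨c, hc⟩ := exists_eq_smul_rep_mk hj
      exact Or.inr ⟨Sum.inl _, c, hc⟩
  have hpow : 0 < q ^ (k - 1) := Nat.pow_pos (hq ▸ Fintype.card_pos)
  have h := lrcExists_of_generator hF (by omega) ((hS.fromRows hS).fromRows hM)
    ((hasRepairPartners_fromRows_self S).fromRows hSM)
  rw [Fintype.card_sum, Fintype.card_sum, card_projectivization, Fintype.card_fin, hq] at h
  simpa only [two_mul, add_comm d] using h

theorem lrcExists_doubled_add_punctured (hF : Nat.card F = q) (hd : 1 ≤ d) {m : ℕ}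
    {M : Matrix (Fin (m + 1)) (Fin k) F} (hM : HasMinWeight M d) :
    LRCExists q (3 * (m + 1) - 1) k (3 * d - 1) 1 := by
  have hpunct (j : Fin m) : M.submatrix Fin.succ id j = 0 ∨
      ∃ a, ∃ c : F, M.submatrix Fin.succ id j = c • M.fromRows M a :=
    Or.inr ⟨Sum.inl j.succ, 1, (one_smul F _).symm⟩
  have h := lrcExists_of_generator hF (by omega) ((hM.fromRows hM).fromRows hM.submatrix_succ)
    ((hasRepairPartners_fromRows_self M).fromRows hpunct)
  convert h using 2
  · simp only [Fintype.card_sum, Fintype.card_fin]; omega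
  · omega

end Constructions

end

theorem constructions_r1 (q k d' : ℕ) (hq : IsPrimePow q) (hk : 1 ≤ k) (hd : 1 ≤ d')
    (h : CodeExists q (nCode q k d') k d') :
    nLRC q k (2 * d') 1 ≤ 2 * nCode q k d' ∧
      nLRC q k (d' + 2 * q ^ (k - 1)) 1 ≤ 2 * ((q ^ k - 1) / (q - 1)) + nCode q k d' ∧
      nLRC q k (3 * d' - 1) 1 ≤ 3 * nCode q k d' - 1 := by
  obtain ⟨F, _, hF, C, hC⟩ := h
  have : Finite F := Nat.finite_of_card_ne_zero (hF ▸ hq.pos.ne')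
  have : Fintype F := Fintype.ofFinite F
  obtain ⟨M, hM⟩ := hC.exists_hasMinWeight
  generalize nCode q k d' = n at C hC M hM
  obtain ⟨m, rfl⟩ : ∃ m, n = m + 1 := by
    have := Submodule.finrank_le C
    rw [hC.1, Module.finrank_fin_fun] at this
    exact ⟨n - 1, by omega⟩
  exact ⟨Nat.sInf_le (lrcExists_doubled hF hd hM),
    Nat.sInf_le (lrcExists_doubled_simplex_add hF hM),
    Nat.sInf_le (lrcExists_doubled_add_punctured hF hd hM)⟩
end
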